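/- arXiv:math/0412466 — 2 statements merged into one kernel-verified Lean document; each statement's English description precedes it below -/
import Mathlib

section
/- Let A = R/I be a graded Artinian Gorenstein quotient of R = K[w,x,y,z] of socle degree j. Let J ⊆ R be a homogeneous ideal which is saturated (J : M = J) and which equals the saturation of the ideal generated by its degree-i graded piece J_i, for some i with 2 ≤ i ≤ j. If J_i ⊆ I_i, then J_u ⊆ I_u for all 0 ≤ u ≤ i; if moreover J_i = I_i, then J_u = I_u for all 0 ≤ u ≤ i. -/
open MvPolynomial

noncomputable section

/-- The Hilbert function of the graded quotient `R/I`, where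
`R = K[x_1,...,x_n]`: the dimension of the image in `R/I` of the space of
degree-`i` homogeneous forms. -/
def hilb (n : ℕ) (K : Type*) [Field K] (I : Ideal (MvPolynomial (Fin n) K)) (i : ℕ) : ℕ :=
  Module.finrank K
    ((homogeneousSubmodule (Fin n) K i).map (Ideal.Quotient.mkₐ K I).toLinearMap)

/-- The socle `(0 : A_+)` of `A = R/I`: the elements killed by (the images of)
all the variables, equivalently by the irrelevant maximal ideal. -/
def socleSub (n : ℕ) (K : Type*) [Field K] (I : Ideal (MvPolynomial (Fin n) K)) :
    Submodule K (MvPolynomial (Fin n) K ⧸ I) :=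
  ⨅ k : Fin n, LinearMap.ker (LinearMap.mulLeft K (Ideal.Quotient.mk I (X k)))

/-- A homogeneous (graded) ideal: one containing each homogeneous component of
each of its elements. -/
def IdealHomog {n : ℕ} {K : Type*} [Field K] (I : Ideal (MvPolynomial (Fin n) K)) : Prop :=
  ∀ f ∈ I, ∀ d : ℕ, homogeneousComponent d f ∈ I

/-- `R/I` is a graded Artinian Gorenstein quotient of `R = K[x_1,...,x_n]`
of socle degree `j`: `I` is homogeneous, `R/I` is finite dimensional over `K`
with 1-dimensional socle, and `j` is the top nonzero degree. -/
def IsAG (n : ℕ) (K : Type*) [Field K] (I : Ideal (MvPolynomial (Fin n) K)) (j : ℕ) : Prop :=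
  IdealHomog I ∧ FiniteDimensional K (MvPolynomial (Fin n) K ⧸ I) ∧
    Module.finrank K (socleSub n K I) = 1 ∧
    hilb n K I j ≠ 0 ∧ ∀ i, j < i → hilb n K I i = 0

/-- Macaulay's bound `c^{(d)}`: writing `c = C(k_d,d) + ... + C(k_1,1)` with
`k_d > k_d-1 > ... > k_1 ≥ 0` (the `d`-th Macaulay expansion, computed greedily),
`c^{(d)} = C(k_d+1,d+1) + ... + C(k_1+1,2)`; by convention `0^{(d)} = 0`. -/
def macB : ℕ → ℕ → ℕ
  | _, 0 => 0
  | c, (d+1) =>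
    if c = 0 then 0 else
      let k := Nat.findGreatest (fun k => Nat.choose k (d+1) ≤ c) (c + d + 1)
      Nat.choose (k+1) (d+2) + macB (c - Nat.choose k (d+1)) d

/-- `(t_0, ..., t_m)` is an O-sequence: `t_0 = 1` and `t_{i+1} ≤ t_i^{(i)}`
for `1 ≤ i ≤ m-1`. -/
def IsOSeq (t : ℕ → ℕ) (m : ℕ) : Prop :=
  t 0 = 1 ∧ ∀ i, 1 ≤ i → i + 1 ≤ m → t (i + 1) ≤ macB (t i) i

/-- `ΔH_{≤ m}` is an O-sequence: the first differences `ΔH_i = h_i - h_{i-1}`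
(with `ΔH_0 = 1`) are nonnegative for `i ≤ m`, and `(ΔH_0, ..., ΔH_m)` is an
O-sequence. -/
def DeltaOSeq (h : ℕ → ℕ) (m : ℕ) : Prop :=
  (∀ i, 1 ≤ i → i ≤ m → h (i - 1) ≤ h i) ∧
    IsOSeq (fun i => if i = 0 then 1 else h i - h (i - 1)) m

/-- The irrelevant maximal ideal `M = (w,x,y,z)` of `R = K[w,x,y,z]`. -/
def Mirr (K : Type*) [Field K] : Ideal (MvPolynomial (Fin 4) K) :=
  Ideal.span (Set.range X)

/-- The saturation `∪_n (N : M^n)` of a homogeneous ideal `N` of `K[w,x,y,z]`. -/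
def idealSaturation {K : Type*} [Field K] (N : Ideal (MvPolynomial (Fin 4) K)) :
    Ideal (MvPolynomial (Fin 4) K) :=
  ⨆ n : ℕ, Submodule.colon N ((Mirr K ^ n : Ideal (MvPolynomial (Fin 4) K)) : Set (MvPolynomial (Fin 4) K))

/-!
Since `R/I` is Gorenstein, its socle is one-dimensional and sits in degree `j`, so a form of
degree `u < j` outside `I` is not killed by every variable; iterating, a form of degree `u ≤ i`
outside `I` can be multiplied by a form of degree `i - u` to a form of degree `i` outside `I`.
Hence a form of `J_u` outside `I` would give one of `J_i ⊆ I_i` outside `I`. Conversely, if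
`I_i ⊆ J_i`, descending induction on `u` gives `I_u ⊆ J_u`: for `f ∈ I_u` all `x_k f` lie in
`I_{u+1} ⊆ J_{u+1}`, so `f ∈ J : M = J`.
-/

section

variable {n : ℕ} {K : Type*} [Field K] {I : Ideal (MvPolynomial (Fin n) K)}

theorem hilb_eq_zero_iff [FiniteDimensional K (MvPolynomial (Fin n) K ⧸ I)] {d : ℕ} :
    hilb n K I d = 0 ↔ ∀ f : MvPolynomial (Fin n) K, f.IsHomogeneous d → f ∈ I := by
  rw [hilb, Submodule.finrank_eq_zero, ← le_bot_iff, Submodule.map_le_iff_le_comap,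
    Submodule.comap_bot]
  constructor
  · intro h f hf
    exact Ideal.Quotient.eq_zero_iff_mem.1 (h ((mem_homogeneousSubmodule _ _).2 hf))
  · intro h f hf
    exact Ideal.Quotient.eq_zero_iff_mem.2 (h f ((mem_homogeneousSubmodule _ _).1 hf))

theorem mk_mem_socleSub_iff {f : MvPolynomial (Fin n) K} :
    Ideal.Quotient.mk I f ∈ socleSub n K I ↔ ∀ k, X k * f ∈ I := by
  simp only [socleSub, Submodule.mem_iInf, LinearMap.mem_ker, LinearMap.mulLeft_apply, ← map_mul,
    Ideal.Quotient.eq_zero_iff_mem]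

theorem mem_of_isHomogeneous_of_forall_X_mul_mem {J : Ideal (MvPolynomial (Fin n) K)}
    (hsat : ∀ f, (∀ k, X k * f ∈ J) → f ∈ J) {i : ℕ}
    (hIJ : ∀ f ∈ I, f.IsHomogeneous i → f ∈ J) {u : ℕ} (hu : u ≤ i) :
    ∀ f ∈ I, f.IsHomogeneous u → f ∈ J := by
  induction hu using Nat.decreasingInduction with
  | self => exact hIJ
  | of_succ u _ ih =>
    intro f hfI hf
    exact hsat f fun k =>
      ih _ (I.mul_mem_left _ hfI) (by simpa [add_comm] using (isHomogeneous_X K k).mul hf)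

namespace IsAG

variable {j : ℕ}

theorem mem_of_lt (hI : IsAG n K I j) {d : ℕ} (hd : j < d) {f : MvPolynomial (Fin n) K}
    (hf : f.IsHomogeneous d) : f ∈ I :=
  have := hI.2.1
  hilb_eq_zero_iff.1 (hI.2.2.2.2 d hd) f hf

theorem exists_isHomogeneous_notMem (hI : IsAG n K I j) :
    ∃ g : MvPolynomial (Fin n) K, g.IsHomogeneous j ∧ g ∉ I := by
  have := hI.2.1
  by_contra! h
  exact hI.2.2.2.1 (hilb_eq_zero_iff.2 h)

theorem socleSub_eq_span (hI : IsAG n K I j) : ∃ g : MvPolynomial (Fin n) K,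
    g.IsHomogeneous j ∧ socleSub n K I = Submodule.span K {Ideal.Quotient.mk I g} := by
  have := hI.2.1
  obtain ⟨g, hg, hgI⟩ := hI.exists_isHomogeneous_notMem
  have hg_socle : Ideal.Quotient.mk I g ∈ socleSub n K I :=
    mk_mem_socleSub_iff.2 fun k =>
      hI.mem_of_lt (Nat.lt_succ_self j) (by simpa [add_comm] using (isHomogeneous_X K k).mul hg)
  have hg_ne : Ideal.Quotient.mk I g ≠ 0 := fun h => hgI (Ideal.Quotient.eq_zero_iff_mem.1 h)
  refine ⟨g, hg, (Submodule.eq_of_le_of_finrank_le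
    ((Submodule.span_singleton_le_iff_mem _ _).2 hg_socle) ?_).symm⟩
  rw [hI.2.2.1, finrank_span_singleton hg_ne]

theorem mem_of_mk_mem_socleSub (hI : IsAG n K I j) {d : ℕ} (hdj : d ≠ j)
    {p : MvPolynomial (Fin n) K} (hp : p.IsHomogeneous d)
    (hp_socle : Ideal.Quotient.mk I p ∈ socleSub n K I) : p ∈ I := by
  obtain ⟨g, hg, hsocle⟩ := hI.socleSub_eq_span
  rw [hsocle, Submodule.mem_span_singleton] at hp_socle
  obtain ⟨c, hc⟩ := hp_socle
  have hdiff : p - C c * g ∈ I := by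
    rw [← Ideal.Quotient.eq_zero_iff_mem, map_sub, ← smul_eq_C_mul, sub_eq_zero, ← hc]
    exact (map_smul (Ideal.Quotient.mkₐ K I) c g).symm
  -- the degree-`d` component of `p - c g` is `p` itself
  simpa [homogeneousComponent_of_mem hp, homogeneousComponent_of_mem hg, hdj] using
    hI.1 _ hdiff d

theorem exists_mul_notMem (hI : IsAG n K I j) {u : ℕ} {f : MvPolynomial (Fin n) K}
    (hf : f.IsHomogeneous u) (hfI : f ∉ I) {t : ℕ} (ht : u + t ≤ j) :
    ∃ h : MvPolynomial (Fin n) K, h.IsHomogeneous t ∧ f * h ∉ I := by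
  induction t with
  | zero => exact ⟨1, isHomogeneous_one _ _, by simpa using hfI⟩
  | succ t ih =>
    obtain ⟨h, hh, hfh⟩ := ih (by omega)
    have hfh_socle : Ideal.Quotient.mk I (f * h) ∉ socleSub n K I :=
      fun hmem => hfh (hI.mem_of_mk_mem_socleSub (by omega) (hf.mul hh) hmem)
    obtain ⟨k, hk⟩ := not_forall.1 (mt mk_mem_socleSub_iff.2 hfh_socle)
    exact ⟨h * X k, hh.mul (isHomogeneous_X K k), by rwa [← mul_assoc, mul_comm _ (X k)]⟩

theorem mem_of_isHomogeneous_of_le (hI : IsAG n K I j) {J : Ideal (MvPolynomial (Fin n) K)}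
    {i : ℕ} (hij : i ≤ j) (hJI : ∀ f ∈ J, f.IsHomogeneous i → f ∈ I) {u : ℕ} (hu : u ≤ i)
    {f : MvPolynomial (Fin n) K} (hfJ : f ∈ J) (hf : f.IsHomogeneous u) : f ∈ I := by
  by_contra hfI
  obtain ⟨h, hh, hfh⟩ := hI.exists_mul_notMem hf hfI (t := i - u) (by omega)
  exact hfh (hJI _ (J.mul_mem_right h hfJ) (by simpa [Nat.add_sub_cancel' hu] using hf.mul hh))

end IsAG

end

theorem mem_of_forall_X_mul_mem {K : Type*} [Field K] {J : Ideal (MvPolynomial (Fin 4) K)}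
    (hJsat : J.colon (Mirr K) = J) {f : MvPolynomial (Fin 4) K} (hf : ∀ k, X k * f ∈ J) :
    f ∈ J := by
  have hMirr : Mirr K ≤ J.colon {f} :=
    Ideal.span_le.2 <| Set.range_subset_iff.2 fun k =>
      Submodule.mem_colon.2 fun _ hs => by rw [Set.mem_singleton_iff.1 hs]; exact hf k
  rw [← hJsat, Submodule.mem_colon]
  intro p hp
  simpa [mul_comm] using Submodule.mem_colon.1 (hMirr hp) f rfl

theorem statement_0_general {K : Type*} [Field K]
    (j : ℕ) (I J : Ideal (MvPolynomial (Fin 4) K))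
    (hI : IsAG 4 K I j)
    (hJsat : Submodule.colon J (Mirr K) = J)
    (i : ℕ) (hij : i ≤ j)
    (hJI : ∀ f ∈ J, f.IsHomogeneous i → f ∈ I) :
    (∀ u ≤ i, ∀ f ∈ J, f.IsHomogeneous u → f ∈ I) ∧
    ((∀ f ∈ I, f.IsHomogeneous i → f ∈ J) →
      ∀ u ≤ i, ∀ f : MvPolynomial (Fin 4) K, f.IsHomogeneous u → (f ∈ J ↔ f ∈ I)) := by
  have hJI_low : ∀ u ≤ i, ∀ f ∈ J, f.IsHomogeneous u → f ∈ I :=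
    fun _ hu _ hfJ hf => hI.mem_of_isHomogeneous_of_le hij hJI hu hfJ hf
  refine ⟨hJI_low, fun hIJ u hu f hf => ⟨fun hfJ => hJI_low u hu f hfJ hf, fun hfI => ?_⟩⟩
  exact mem_of_isHomogeneous_of_forall_X_mul_mem (fun _ => mem_of_forall_X_mul_mem hJsat) hIJ hu
    f hfI hf

/-- Let `A = R/I` be a graded Artinian Gorenstein quotient of
`R = K[w,x,y,z]` of socle degree `j`, and let `J` be a saturated homogeneous
ideal which equals the saturation of the ideal generated by its degree-`i`
piece, for some `2 ≤ i ≤ j`.  If `J_i ⊆ I_i` then `J_u ⊆ I_u` for all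
`0 ≤ u ≤ i`; if moreover `J_i = I_i` then `J_u = I_u` for all `0 ≤ u ≤ i`. -/
theorem statement_0 {K : Type*} [Field K] [IsAlgClosed K] [CharZero K]
    (j : ℕ) (I J : Ideal (MvPolynomial (Fin 4) K))
    (hI : IsAG 4 K I j)
    (hJhom : IdealHomog J)
    (hJsat : Submodule.colon J (Mirr K) = J)
    (i : ℕ) (hi2 : 2 ≤ i) (hij : i ≤ j)
    (hJgen : J = idealSaturation (Ideal.span {f | f ∈ J ∧ f.IsHomogeneous i}))
    (hJI : ∀ f ∈ J, f.IsHomogeneous i → f ∈ I) :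
    (∀ u ≤ i, ∀ f ∈ J, f.IsHomogeneous u → f ∈ I) ∧
    ((∀ f ∈ I, f.IsHomogeneous i → f ∈ J) →
      ∀ u ≤ i, ∀ f : MvPolynomial (Fin 4) K, f.IsHomogeneous u → (f ∈ J ↔ f ∈ I)) :=
  statement_0_general j I J hI hJsat i hij hJI

end
end

section
/- Let A = R/I be a graded Artinian Gorenstein quotient of R = K[w,x,y,z] of socle degree j ≥ 5 with I_1 = 0 and I_2 = span{wx, wy, wz}, and let J = I ∩ K[x,y,z] ⊆ R' = K[x,y,z]. Then dim_K (R/I²)_j = 7 + dim_K (R'/J²)_j + ν_{j−1}(J), where ν_{j−1}(J) = dim_K ( J / ((x,y,z)·J) )_{j−1} is the number of minimal generators of J in degree j−1. -/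
open MvPolynomial

noncomputable section

/-- The ideal `J = I ∩ K[x,y,z]` of `R' = K[x,y,z]`, for an ideal `I` of
`R = K[w,x,y,z]` (where `w = X 0`, and `R' ↪ R` sends the variables of `R'`
to `x = X 1`, `y = X 2`, `z = X 3`). -/
def interR' {K : Type*} [Field K] (I : Ideal (MvPolynomial (Fin 4) K)) :
    Ideal (MvPolynomial (Fin 3) K) :=
  Ideal.comap (rename (Fin.succ : Fin 3 → Fin 4)).toRingHom I

/-- The number `ν_i(J)` of minimal generators of degree `i` of a homogeneous
ideal `J ⊆ K[x,y,z]`: the dimension of the degree-`i` part of `J/MJ`, where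
`M = (x,y,z)`, computed as `dim_K J_i - dim_K (MJ)_i`. -/
def numGens {K : Type*} [Field K] (J : Ideal (MvPolynomial (Fin 3) K)) (i : ℕ) : ℕ :=
  Module.finrank K
      ↥(Submodule.restrictScalars K J ⊓ homogeneousSubmodule (Fin 3) K i) -
    Module.finrank K
      ↥(Submodule.restrictScalars K (Ideal.span (Set.range X) * J) ⊓
        homogeneousSubmodule (Fin 3) K i)

namespace Stmt12

variable {K : Type*} [Field K]

/-- degree cast helper -/
lemma homog_cast {n : ℕ} {p : MvPolynomial (Fin n) K} {a b : ℕ}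
    (h : p.IsHomogeneous a) (e : a = b) : p.IsHomogeneous b := e ▸ h

instance fdHomog (n d : ℕ) : FiniteDimensional K ↥(homogeneousSubmodule (Fin n) K d) := by
  have hle : homogeneousSubmodule (Fin n) K d ≤ restrictTotalDegree (Fin n) K d := by
    intro p hp
    rw [mem_restrictTotalDegree]
    exact ((mem_homogeneousSubmodule _ _).mp hp).totalDegree_le
  exact FiniteDimensional.of_injective (Submodule.inclusion hle)
    (Submodule.inclusion_injective hle)

lemma hilb_add_finrank (n : ℕ) (I : Ideal (MvPolynomial (Fin n) K)) (i : ℕ) :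
    hilb n K I i +
      Module.finrank K ↥(Submodule.restrictScalars K I ⊓ homogeneousSubmodule (Fin n) K i) =
      Module.finrank K ↥(homogeneousSubmodule (Fin n) K i) := by
  classical
  set HS := homogeneousSubmodule (Fin n) K i
  set L := (Ideal.Quotient.mkₐ K I).toLinearMap.comp HS.subtype with hL
  have hrange : LinearMap.range L = HS.map (Ideal.Quotient.mkₐ K I).toLinearMap := by
    rw [hL, LinearMap.range_comp, Submodule.range_subtype]
  have hker : LinearMap.ker L = (Submodule.restrictScalars K I ⊓ HS).comap HS.subtype := by
    ext x
    simp only [hL, LinearMap.mem_ker, LinearMap.comp_apply, Submodule.subtype_apply,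
      Submodule.mem_comap, Submodule.mem_inf, Submodule.restrictScalars_mem]
    rw [AlgHom.toLinearMap_apply, Ideal.Quotient.mkₐ_eq_mk, Ideal.Quotient.eq_zero_iff_mem]
    exact ⟨fun h => ⟨h, x.2⟩, fun h => h.1⟩
  have h1 := LinearMap.finrank_range_add_finrank_ker L
  rw [hrange, hker] at h1
  have h2 : Module.finrank K ↥((Submodule.restrictScalars K I ⊓ HS).comap HS.subtype) =
      Module.finrank K ↥(Submodule.restrictScalars K I ⊓ HS) :=
    LinearEquiv.finrank_eq (Submodule.comapSubtypeEquivOfLe inf_le_right)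
  rw [h2] at h1
  exact h1

lemma mem_of_hilb_zero {n : ℕ} {I : Ideal (MvPolynomial (Fin n) K)}
    [FiniteDimensional K (MvPolynomial (Fin n) K ⧸ I)] {i : ℕ} (h : hilb n K I i = 0)
    {p : MvPolynomial (Fin n) K} (hp : p.IsHomogeneous i) : p ∈ I := by
  have h0 : (homogeneousSubmodule (Fin n) K i).map (Ideal.Quotient.mkₐ K I).toLinearMap = ⊥ :=
    Submodule.finrank_eq_zero.mp h
  have hmem : (Ideal.Quotient.mkₐ K I).toLinearMap p ∈
      (homogeneousSubmodule (Fin n) K i).map (Ideal.Quotient.mkₐ K I).toLinearMap :=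
    Submodule.mem_map_of_mem ((mem_homogeneousSubmodule _ _).mpr hp)
  rw [h0, Submodule.mem_bot] at hmem
  rwa [AlgHom.toLinearMap_apply, Ideal.Quotient.mkₐ_eq_mk, Ideal.Quotient.eq_zero_iff_mem] at hmem

lemma exists_homog_not_mem {n : ℕ} {I : Ideal (MvPolynomial (Fin n) K)} {i : ℕ}
    (h : hilb n K I i ≠ 0) :
    ∃ p : MvPolynomial (Fin n) K, p.IsHomogeneous i ∧ p ∉ I := by
  by_contra hc
  push_neg at hc
  apply h
  have h0 : (homogeneousSubmodule (Fin n) K i).map (Ideal.Quotient.mkₐ K I).toLinearMap = ⊥ := by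
    rw [Submodule.eq_bot_iff]
    rintro x ⟨p, hp, rfl⟩
    rw [AlgHom.toLinearMap_apply, Ideal.Quotient.mkₐ_eq_mk, Ideal.Quotient.eq_zero_iff_mem]
    exact hc p ((mem_homogeneousSubmodule _ _).mp hp)
  rw [hilb, h0, finrank_bot]

/-- the `t`-th coefficient of `p` viewed as polynomial in `w = X 0`. -/
def cL (t : ℕ) : MvPolynomial (Fin 4) K →ₗ[K] MvPolynomial (Fin 3) K where
  toFun p := (MvPolynomial.finSuccEquiv K 3 p).coeff t
  map_add' p q := by
    show (MvPolynomial.finSuccEquiv K 3 (p + q)).coeff t = _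
    rw [map_add, Polynomial.coeff_add]
  map_smul' a p := by
    show (MvPolynomial.finSuccEquiv K 3 (a • p)).coeff t = _
    rw [map_smul, Polynomial.coeff_smul]
    rfl

lemma cL_apply (t : ℕ) (p : MvPolynomial (Fin 4) K) :
    cL t p = (MvPolynomial.finSuccEquiv K 3 p).coeff t := rfl

lemma E_rename (q : MvPolynomial (Fin 3) K) :
    MvPolynomial.finSuccEquiv K 3 (rename Fin.succ q) = Polynomial.C q := by
  have h : ((MvPolynomial.finSuccEquiv K 3 : MvPolynomial (Fin 4) K ≃ₐ[K]
        Polynomial (MvPolynomial (Fin 3) K)).toAlgHom.comp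
        (rename (Fin.succ : Fin 3 → Fin 4)) : MvPolynomial (Fin 3) K →ₐ[K] _) =
      Polynomial.CAlgHom := by
    apply MvPolynomial.algHom_ext
    intro i
    simp [MvPolynomial.finSuccEquiv_X_succ, Polynomial.CAlgHom]
  exact DFunLike.congr_fun h q

lemma E_pow_mul_rename (s : ℕ) (q : MvPolynomial (Fin 3) K) :
    MvPolynomial.finSuccEquiv K 3 (X 0 ^ s * rename Fin.succ q) = Polynomial.monomial s q := by
  rw [map_mul, map_pow, MvPolynomial.finSuccEquiv_X_zero, E_rename, mul_comm,
    Polynomial.C_mul_X_pow_eq_monomial]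

lemma cL_pow_mul_rename (t s : ℕ) (q : MvPolynomial (Fin 3) K) :
    cL t (X 0 ^ s * rename Fin.succ q) = if s = t then q else 0 := by
  rw [cL_apply, E_pow_mul_rename, Polynomial.coeff_monomial]

lemma cL_isHomogeneous {p : MvPolynomial (Fin 4) K} {d t : ℕ}
    (hp : p.IsHomogeneous d) (h : t ≤ d) : (cL t p).IsHomogeneous (d - t) :=
  hp.finSuccEquiv_coeff_isHomogeneous t (d - t) (by omega)

lemma cL_eq_zero_of_lt {p : MvPolynomial (Fin 4) K} {d t : ℕ}
    (hp : p.IsHomogeneous d) (h : d < t) : cL t p = 0 := by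
  ext m
  rw [cL_apply, MvPolynomial.finSuccEquiv_coeff_coeff, coeff_zero]
  by_contra hc
  have hw := hp hc
  simp only [Finsupp.weight_apply, Pi.one_apply, smul_eq_mul, mul_one, Finsupp.sum_cons] at hw
  omega

lemma cL_mul (f g : MvPolynomial (Fin 4) K) (n : ℕ) :
    cL n (f * g) = ∑ k ∈ Finset.range (n + 1), cL k f * cL (n - k) g := by
  show (MvPolynomial.finSuccEquiv K 3 (f * g)).coeff n = _
  rw [map_mul, Polynomial.coeff_mul, Finset.Nat.sum_antidiagonal_eq_sum_range_succ_mk]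
  rfl

lemma reconstruct {p : MvPolynomial (Fin 4) K} {d : ℕ} (hp : p.IsHomogeneous d) :
    p = ∑ t ∈ Finset.range (d + 1), X 0 ^ t * rename Fin.succ (cL t p) := by
  apply (MvPolynomial.finSuccEquiv K 3).injective
  rw [map_sum]
  simp_rw [E_pow_mul_rename]
  refine Polynomial.as_sum_range' _ _ ?_
  have h1 := MvPolynomial.natDegree_finSuccEquiv p
  have h2 : degreeOf 0 p ≤ p.totalDegree := degreeOf_le_totalDegree p 0
  have h3 := hp.totalDegree_le
  omega

end Stmt12
namespace Stmt12

variable {K : Type*} [Field K]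

section Main

variable {I : Ideal (MvPolynomial (Fin 4) K)} {j : ℕ}

lemma mem_span_X_of_homog {q : MvPolynomial (Fin 3) K} {e : ℕ}
    (hq : q.IsHomogeneous e) (he : 1 ≤ e) :
    q ∈ Ideal.span (Set.range (X : Fin 3 → MvPolynomial (Fin 3) K)) := by
  rw [← Set.image_univ, mem_ideal_span_X_image]
  intro m hm
  have hw := hq (mem_support_iff.mp hm)
  by_contra hc
  push_neg at hc
  have hm0 : m = 0 := by
    ext i
    simpa using hc i (Set.mem_univ i)
  rw [hm0, map_zero] at hw
  omega

lemma X0_mul_mem (hWI : ∀ k : Fin 3, (X 0 : MvPolynomial (Fin 4) K) * X k.succ ∈ I)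
    {q : MvPolynomial (Fin 3) K}
    (hq : q ∈ Ideal.span (Set.range (X : Fin 3 → MvPolynomial (Fin 3) K))) :
    (X 0 : MvPolynomial (Fin 4) K) * rename Fin.succ q ∈ I := by
  induction hq using Submodule.span_induction with
  | mem x hx =>
    obtain ⟨i, rfl⟩ := hx
    rw [rename_X]
    exact hWI i
  | zero => rw [map_zero, mul_zero]; exact zero_mem _
  | add x y _ _ hx hy => rw [map_add, mul_add]; exact add_mem hx hy
  | smul r x _ hx =>
    rw [smul_eq_mul, map_mul]
    have : (X 0 : MvPolynomial (Fin 4) K) * (rename Fin.succ r * rename Fin.succ x) =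
        rename Fin.succ r * (X 0 * rename Fin.succ x) := by ring
    rw [this]
    exact Ideal.mul_mem_left _ _ hx

lemma mid_term_mem (hWI : ∀ k : Fin 3, (X 0 : MvPolynomial (Fin 4) K) * X k.succ ∈ I)
    {q : MvPolynomial (Fin 3) K} {e : ℕ} (hq : q.IsHomogeneous e) (he : 1 ≤ e)
    {t : ℕ} (ht : 1 ≤ t) :
    (X 0 : MvPolynomial (Fin 4) K) ^ t * rename Fin.succ q ∈ I := by
  obtain ⟨t', rfl⟩ : ∃ t', t = t' + 1 := ⟨t - 1, by omega⟩
  have h : (X 0 : MvPolynomial (Fin 4) K) ^ (t' + 1) * rename Fin.succ q =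
      X 0 ^ t' * (X 0 * rename Fin.succ q) := by ring
  rw [h]
  exact Ideal.mul_mem_left _ _ (X0_mul_mem hWI (mem_span_X_of_homog hq he))

lemma prod_X_pow_mem (s : Finset (Fin 3)) (m : Fin 3 → ℕ) :
    (∏ i ∈ s, (X i : MvPolynomial (Fin 3) K) ^ m i) ∈
      (Ideal.span (Set.range (X : Fin 3 → MvPolynomial (Fin 3) K))) ^ (∑ i ∈ s, m i) := by
  classical
  induction s using Finset.induction with
  | empty => simp [Ideal.one_eq_top]
  | insert _ _ h ih =>
    rw [Finset.prod_insert h, Finset.sum_insert h, pow_add]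
    exact Ideal.mul_mem_mul (Ideal.pow_mem_pow (Ideal.subset_span (Set.mem_range_self _)) _) ih

lemma homog_mem_pow {q : MvPolynomial (Fin 3) K} {e : ℕ} (hq : q.IsHomogeneous e) :
    q ∈ (Ideal.span (Set.range (X : Fin 3 → MvPolynomial (Fin 3) K))) ^ e := by
  rw [← q.support_sum_monomial_coeff]
  refine Submodule.sum_mem _ fun m hm => ?_
  have hw := hq (mem_support_iff.mp hm)
  simp only [Finsupp.weight_apply, Pi.one_apply, smul_eq_mul, mul_one] at hw
  rw [monomial_eq]
  refine Ideal.mul_mem_left _ _ ?_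
  have : (Finsupp.prod m fun n e => (X n : MvPolynomial (Fin 3) K) ^ e) =
      ∏ i ∈ m.support, (X i : MvPolynomial (Fin 3) K) ^ m i := rfl
  rw [this, ← hw]
  exact prod_X_pow_mem m.support m

lemma homog_zero_eq_C {q : MvPolynomial (Fin 3) K} (hq : q.IsHomogeneous 0) :
    q = C (coeff 0 q) := by
  ext m
  rcases eq_or_ne m 0 with rfl | hm
  · simp
  · rw [coeff_C, if_neg (Ne.symm hm)]
    refine hq.coeff_eq_zero ?_
    rwa [Ne, Finsupp.degree_eq_zero_iff]

lemma socle_arg (hAG : IsAG 4 K I j) {v : MvPolynomial (Fin 4) K} {e : ℕ}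
    (he : e < j) (hv : v.IsHomogeneous e) (hvI : v ∉ I)
    (hkill : ∀ k : Fin 4, X k * v ∈ I) : False := by
  obtain ⟨hIh, hfd, hsoc, hj0, htop⟩ := hAG
  haveI := hfd
  obtain ⟨u, hu, huI⟩ := exists_homog_not_mem hj0
  set μ := (Ideal.Quotient.mkₐ K I).toLinearMap with hμ
  have hmem_iff : ∀ p : MvPolynomial (Fin 4) K, μ p = 0 ↔ p ∈ I := by
    intro p
    rw [hμ, AlgHom.toLinearMap_apply, Ideal.Quotient.mkₐ_eq_mk, Ideal.Quotient.eq_zero_iff_mem]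
  have hsocmem : ∀ (p : MvPolynomial (Fin 4) K), (∀ k : Fin 4, X k * p ∈ I) →
      μ p ∈ socleSub 4 K I := by
    intro p hp
    rw [socleSub, Submodule.mem_iInf]
    intro k
    rw [LinearMap.mem_ker, LinearMap.mulLeft_apply]
    have hμp : ∀ r : MvPolynomial (Fin 4) K, μ r = Ideal.Quotient.mk I r := fun r => by
      rw [hμ, AlgHom.toLinearMap_apply, Ideal.Quotient.mkₐ_eq_mk]
    rw [hμp, ← map_mul, Ideal.Quotient.eq_zero_iff_mem]
    exact hp k
  have husoc : μ u ∈ socleSub 4 K I := by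
    refine hsocmem u fun k => ?_
    refine mem_of_hilb_zero (htop (1 + j) (by omega)) ?_
    exact (isHomogeneous_X K k).mul hu
  have hvsoc : μ v ∈ socleSub 4 K I := hsocmem v hkill
  have hli : LinearIndependent K ![μ v, μ u] := by
    rw [LinearIndependent.pair_iff]
    intro s t hst
    have hmem : s • v + t • u ∈ I := by
      rw [← hmem_iff, map_add, map_smul, map_smul]
      exact hst
    have hcomp := hIh _ hmem e
    rw [map_add, map_smul, map_smul,
      homogeneousComponent_of_mem ((mem_homogeneousSubmodule _ _).mpr hv), if_pos rfl,
      homogeneousComponent_of_mem ((mem_homogeneousSubmodule _ _).mpr hu),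
      if_neg he.ne, smul_zero, add_zero] at hcomp
    have hs : s = 0 := by
      by_contra hs
      apply hvI
      have hv2 : v = C s⁻¹ * (s • v) := by
        rw [smul_eq_C_mul, ← mul_assoc, ← C_mul, inv_mul_cancel₀ hs, C_1, one_mul]
      rw [hv2]
      exact Ideal.mul_mem_left _ _ hcomp
    refine ⟨hs, ?_⟩
    rw [hs, zero_smul, zero_add] at hst
    rcases smul_eq_zero.mp hst with ht | hy
    · exact ht
    · exact absurd ((hmem_iff u).mp hy) huI
  have hspan : Submodule.span K (Set.range ![μ v, μ u]) ≤ socleSub 4 K I := by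
    rw [Submodule.span_le]
    rintro z ⟨i, rfl⟩
    fin_cases i
    · simpa using hvsoc
    · simpa using husoc
  have h2 : (2 : ℕ) ≤ Module.finrank K ↥(socleSub 4 K I) := by
    have hcard := finrank_span_eq_card hli
    have hmono := Submodule.finrank_mono hspan
    rw [hcard] at hmono
    simpa using hmono
  omega

lemma w_pow_not_mem (hAG : IsAG 4 K I j)
    (hWI : ∀ k : Fin 3, (X 0 : MvPolynomial (Fin 4) K) * X k.succ ∈ I)
    (hI1 : ∀ f ∈ I, f.IsHomogeneous 1 → f = 0) :
    ∀ t, t ≤ j → (X 0 : MvPolynomial (Fin 4) K) ^ t ∉ I := by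
  intro t
  induction t with
  | zero =>
    intro _ h0
    rw [pow_zero] at h0
    obtain ⟨u, hu, huI⟩ := exists_homog_not_mem hAG.2.2.2.1
    exact huI (by simpa using I.mul_mem_left u h0)
  | succ t ih =>
    intro htj hmem
    rcases Nat.eq_zero_or_pos t with rfl | ht
    · rw [pow_one] at hmem
      exact MvPolynomial.X_ne_zero _ (hI1 _ hmem (isHomogeneous_X _ _))
    · refine socle_arg hAG (v := X 0 ^ t) (e := t) (by omega)
        (homog_cast ((isHomogeneous_X K (0 : Fin 4)).pow t) (one_mul t)) (ih (by omega)) ?_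
      intro k
      refine Fin.cases ?_ (fun i => ?_) k
      · have h : (X 0 : MvPolynomial (Fin 4) K) * X 0 ^ t = X 0 ^ (t + 1) := by ring
        rwa [h]
      · obtain ⟨t', rfl⟩ : ∃ t', t = t' + 1 := ⟨t - 1, by omega⟩
        have h : (X i.succ : MvPolynomial (Fin 4) K) * X 0 ^ (t' + 1) =
            (X 0 * X i.succ) * X 0 ^ t' := by ring
        rw [h]
        exact Ideal.mul_mem_right _ _ (hWI i)

lemma low_comp_zero (hAG : IsAG 4 K I j) (hI1 : ∀ f ∈ I, f.IsHomogeneous 1 → f = 0)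
    {q : MvPolynomial (Fin 4) K} {d : ℕ} (hq : q ∈ I) (hqd : q.IsHomogeneous d)
    (hd : d ≤ 1) : q = 0 := by
  interval_cases d
  · -- degree 0 : q = C k
    have hC : q = C (coeff 0 q) := by
      ext m
      rcases eq_or_ne m 0 with rfl | hm
      · simp
      · rw [coeff_C, if_neg (Ne.symm hm)]
        refine hqd.coeff_eq_zero ?_
        rwa [Ne, Finsupp.degree_eq_zero_iff]
    rcases eq_or_ne (coeff 0 q) 0 with h0 | h0
    · rw [hC, h0, map_zero]
    · exfalso
      obtain ⟨u, hu, huI⟩ := exists_homog_not_mem hAG.2.2.2.1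
      apply huI
      have h1 : (1 : MvPolynomial (Fin 4) K) ∈ I := by
        have := I.mul_mem_left (C (coeff 0 q)⁻¹) (hC ▸ hq)
        rwa [← C_mul, inv_mul_cancel₀ h0, C_1] at this
      simpa using I.mul_mem_left u h1
  · exact hI1 q hq hqd

lemma top_cL_zero (hAG : IsAG 4 K I j)
    (hWI : ∀ k : Fin 3, (X 0 : MvPolynomial (Fin 4) K) * X k.succ ∈ I)
    (hI1 : ∀ f ∈ I, f.IsHomogeneous 1 → f = 0)
    {f : MvPolynomial (Fin 4) K} {d : ℕ} (hf : f ∈ I) (hfd : f.IsHomogeneous d)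
    (h2 : 2 ≤ d) (hdj : d + 1 ≤ j) : cL d f = 0 := by
  by_contra hne
  set k := coeff 0 (cL d f) with hk
  have hα : cL d f = C k :=
    homog_zero_eq_C (homog_cast (cL_isHomogeneous hfd le_rfl) (by omega))
  have hk0 : k ≠ 0 := by
    intro h0
    apply hne
    rw [hα, h0, map_zero]
  -- X 0 * f = ∑ X0^(t+1) φ (cL t f)
  have hXf : (X 0 : MvPolynomial (Fin 4) K) * f =
      ∑ t ∈ Finset.range (d + 1), X 0 ^ (t + 1) * rename Fin.succ (cL t f) := by
    conv_lhs => rw [reconstruct hfd]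
    rw [Finset.mul_sum]
    refine Finset.sum_congr rfl fun t _ => by ring
  have hsum : ∑ t ∈ Finset.range (d + 1), (X 0 : MvPolynomial (Fin 4) K) ^ (t + 1) *
      rename Fin.succ (cL t f) ∈ I := hXf ▸ I.mul_mem_left _ hf
  rw [Finset.sum_range_succ] at hsum
  have hlow : ∑ t ∈ Finset.range d, (X 0 : MvPolynomial (Fin 4) K) ^ (t + 1) *
      rename Fin.succ (cL t f) ∈ I := by
    refine Submodule.sum_mem _ fun t htr => ?_
    have htd : t < d := Finset.mem_range.mp htr
    exact mid_term_mem hWI (cL_isHomogeneous hfd (by omega)) (by omega) (by omega)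
  have htop : (X 0 : MvPolynomial (Fin 4) K) ^ (d + 1) * rename Fin.succ (cL d f) ∈ I := by
    have := Submodule.sub_mem _ hsum hlow
    simpa using this
  rw [hα, rename_C] at htop
  have hpow : (X 0 : MvPolynomial (Fin 4) K) ^ (d + 1) ∈ I := by
    have h1 : (X 0 : MvPolynomial (Fin 4) K) ^ (d + 1) =
        C k⁻¹ * (X 0 ^ (d + 1) * C k) := by
      rw [mul_comm ((X 0 : MvPolynomial (Fin 4) K) ^ (d + 1)) (C k), ← mul_assoc, ← C_mul,
        inv_mul_cancel₀ hk0, C_1, one_mul]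
    rw [h1]
    exact Ideal.mul_mem_left _ _ htop
  exact w_pow_not_mem hAG hWI hI1 (d + 1) hdj hpow

lemma structure_iff (hAG : IsAG 4 K I j)
    (hWI : ∀ k : Fin 3, (X 0 : MvPolynomial (Fin 4) K) * X k.succ ∈ I)
    (hI1 : ∀ f ∈ I, f.IsHomogeneous 1 → f = 0)
    {f : MvPolynomial (Fin 4) K} {d : ℕ} (hfd : f.IsHomogeneous d)
    (h2 : 2 ≤ d) (hdj : d + 1 ≤ j) :
    f ∈ I ↔ cL 0 f ∈ interR' I ∧ cL d f = 0 := by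
  have hmid : ∀ t, 1 ≤ t → t < d →
      (X 0 : MvPolynomial (Fin 4) K) ^ t * rename Fin.succ (cL t f) ∈ I := fun t ht htd =>
    mid_term_mem hWI (cL_isHomogeneous hfd (by omega)) (by omega) (by omega)
  constructor
  · intro hf
    have htop := top_cL_zero hAG hWI hI1 hf hfd h2 hdj
    refine ⟨?_, htop⟩
    have hrec := reconstruct hfd
    rw [Finset.sum_range_succ'] at hrec
    have hsum : ∑ t ∈ Finset.range d, (X 0 : MvPolynomial (Fin 4) K) ^ (t + 1) *
        rename Fin.succ (cL (t + 1) f) ∈ I := by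
      refine Submodule.sum_mem _ fun t htr => ?_
      have htd : t < d := Finset.mem_range.mp htr
      by_cases heq : t + 1 = d
      · rw [heq, htop, map_zero, mul_zero]
        exact zero_mem _
      · exact hmid (t + 1) (by omega) (by omega)
    have hphi : rename Fin.succ (cL 0 f) ∈ I := by
      have h0 : (X 0 : MvPolynomial (Fin 4) K) ^ 0 * rename Fin.succ (cL 0 f) =
          f - ∑ t ∈ Finset.range d, (X 0 : MvPolynomial (Fin 4) K) ^ (t + 1) *
            rename Fin.succ (cL (t + 1) f) := by
        rw [eq_sub_iff_add_eq, add_comm]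
        exact hrec.symm
      rw [pow_zero, one_mul] at h0
      rw [h0]
      exact Submodule.sub_mem _ hf hsum
    exact hphi
  · rintro ⟨h0, htop⟩
    rw [reconstruct hfd]
    refine Submodule.sum_mem _ fun t htr => ?_
    have htd : t < d + 1 := Finset.mem_range.mp htr
    rcases Nat.eq_zero_or_pos t with rfl | ht
    · rw [pow_zero, one_mul]
      exact h0
    · by_cases heq : t = d
      · rw [heq, htop, map_zero, mul_zero]
        exact zero_mem _
      · exact hmid t ht (by omega)

end Main
end Stmt12
namespace Stmt12

variable {K : Type*} [Field K]

section Main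

variable {I : Ideal (MvPolynomial (Fin 4) K)} {j : ℕ}

lemma rename_mul_X (i : Fin 3) (q : MvPolynomial (Fin 3) K) :
    (X i.succ : MvPolynomial (Fin 4) K) * rename Fin.succ q =
      rename Fin.succ (X i * q) := by
  rw [map_mul, rename_X]

/-- There is a degree-`j` form of `R'` not in `I`. -/
lemma exists_phi_not_mem (hAG : IsAG 4 K I j) (hj5 : 5 ≤ j)
    (hWI : ∀ k : Fin 3, (X 0 : MvPolynomial (Fin 4) K) * X k.succ ∈ I)
    (hI1 : ∀ f ∈ I, f.IsHomogeneous 1 → f = 0) :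
    ∃ a : MvPolynomial (Fin 3) K, a.IsHomogeneous j ∧ rename Fin.succ a ∉ I := by
  by_contra hcon
  push_neg at hcon
  have key : ∀ m, ∀ q : MvPolynomial (Fin 3) K, q.IsHomogeneous (j - m) → 1 ≤ j - m →
      rename Fin.succ q ∈ I := by
    intro m
    induction m with
    | zero => exact fun q hq _ => hcon q (homog_cast hq (by omega))
    | succ m ih =>
      intro q hq h1
      by_contra hqI
      refine socle_arg hAG (v := rename Fin.succ q) (e := j - (m + 1)) (by omega)
        hq.rename_isHomogeneous hqI ?_
      intro k
      refine Fin.cases ?_ (fun i => ?_) k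
      · exact X0_mul_mem hWI (mem_span_X_of_homog hq h1)
      · rw [rename_mul_X]
        exact ih (X i * q) (homog_cast ((isHomogeneous_X K i).mul hq) (by omega)) (by omega)
  have h1 : rename Fin.succ (X 0 : MvPolynomial (Fin 3) K) ∈ I :=
    key (j - 1) (X 0) (homog_cast (isHomogeneous_X K 0) (by omega)) (by omega)
  have h0 := hI1 _ h1 (isHomogeneous_X K (0 : Fin 3)).rename_isHomogeneous
  rw [rename_X] at h0
  exact MvPolynomial.X_ne_zero _ h0

/-- A linear form of `R'` multiplying all of `R'_{j-1}` into `I` is zero. -/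
lemma ell_zero (hAG : IsAG 4 K I j) (hj5 : 5 ≤ j)
    (hWI : ∀ k : Fin 3, (X 0 : MvPolynomial (Fin 4) K) * X k.succ ∈ I)
    (hI1 : ∀ f ∈ I, f.IsHomogeneous 1 → f = 0)
    {l : MvPolynomial (Fin 3) K} (hl : l.IsHomogeneous 1)
    (hall : ∀ b : MvPolynomial (Fin 3) K, b.IsHomogeneous (j - 1) →
      rename Fin.succ (l * b) ∈ I) : l = 0 := by
  have key : ∀ m, ∀ b : MvPolynomial (Fin 3) K, b.IsHomogeneous (j - 1 - m) →
      rename Fin.succ (l * b) ∈ I := by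
    intro m
    induction m with
    | zero => exact fun b hb => hall b (homog_cast hb (by omega))
    | succ m ih =>
      intro b hb
      by_cases hm : j - 1 - (m + 1) = j - 1 - m
      · exact ih b (homog_cast hb hm)
      · have hlb : (l * b).IsHomogeneous (1 + (j - 1 - (m + 1))) := hl.mul hb
        by_contra hbI
        refine socle_arg hAG (v := rename Fin.succ (l * b)) (e := 1 + (j - 1 - (m + 1)))
          (by omega) hlb.rename_isHomogeneous hbI ?_
        intro k
        refine Fin.cases ?_ (fun i => ?_) k
        · exact X0_mul_mem hWI (mem_span_X_of_homog hlb (by omega))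
        · rw [rename_mul_X]
          have hcomm : X i * (l * b) = l * (X i * b) := by ring
          rw [hcomm]
          exact ih (X i * b) (homog_cast ((isHomogeneous_X K i).mul hb) (by omega))
  have h1 : rename Fin.succ l ∈ I := by
    have := key (j - 1) 1 (homog_cast (isHomogeneous_one (Fin 3) K) (by omega))
    rwa [mul_one] at this
  have h0 := hI1 _ h1 hl.rename_isHomogeneous
  exact rename_injective Fin.succ (Fin.succ_injective 3) (by rwa [map_zero])

/-- degree `j-1` form multiplied into `J` by all variables is in `J`. -/
lemma mem_J_of_mul_mem (hAG : IsAG 4 K I j) (hj5 : 5 ≤ j)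
    (hWI : ∀ k : Fin 3, (X 0 : MvPolynomial (Fin 4) K) * X k.succ ∈ I)
    {b : MvPolynomial (Fin 3) K} (hb : b.IsHomogeneous (j - 1))
    (h0 : ∀ i : Fin 3, rename Fin.succ (X i * b) ∈ I) : rename Fin.succ b ∈ I := by
  by_contra hbI
  refine socle_arg hAG (v := rename Fin.succ b) (e := j - 1) (by omega)
    hb.rename_isHomogeneous hbI ?_
  intro k
  refine Fin.cases ?_ (fun i => ?_) k
  · exact X0_mul_mem hWI (mem_span_X_of_homog hb (by omega))
  · rw [rename_mul_X]
    exact h0 i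

end Main
end Stmt12
namespace Stmt12

variable {K : Type*} [Field K]

lemma homogComponent_mul_expand (f g : MvPolynomial (Fin 4) K) (n : ℕ) :
    homogeneousComponent n (f * g) =
      ∑ d ∈ Finset.range (f.totalDegree + 1), ∑ e ∈ Finset.range (g.totalDegree + 1),
        homogeneousComponent n (homogeneousComponent d f * homogeneousComponent e g) := by
  conv_lhs => rw [← sum_homogeneousComponent f]
  conv_lhs => rw [← sum_homogeneousComponent g]
  rw [Finset.sum_mul_sum, map_sum]
  exact Finset.sum_congr rfl fun d _ => by rw [map_sum]

section Main

variable {I : Ideal (MvPolynomial (Fin 4) K)} {j : ℕ}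

lemma Isq_conditions (hAG : IsAG 4 K I j) (hj5 : 5 ≤ j)
    (hWI : ∀ k : Fin 3, (X 0 : MvPolynomial (Fin 4) K) * X k.succ ∈ I)
    (hI1 : ∀ f ∈ I, f.IsHomogeneous 1 → f = 0)
    {p : MvPolynomial (Fin 4) K} (hp : p.IsHomogeneous j) (hpI : p ∈ I ^ 2) :
    cL 0 p ∈ (interR' I) ^ 2 ∧
      cL 1 p ∈ Ideal.span (Set.range (X : Fin 3 → MvPolynomial (Fin 3) K)) * interR' I ∧
      cL (j - 1) p = 0 ∧ cL j p = 0 := by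
  set M3 := Ideal.span (Set.range (X : Fin 3 → MvPolynomial (Fin 3) K)) with hM3
  set Cond : Submodule K (MvPolynomial (Fin 4) K) :=
    (Submodule.restrictScalars K ((interR' I) ^ 2)).comap (cL 0) ⊓
      ((Submodule.restrictScalars K (M3 * interR' I)).comap (cL 1) ⊓
        (LinearMap.ker (cL (j - 1)) ⊓ LinearMap.ker (cL (j)))) with hCond
  have hgen : ∀ f ∈ I, ∀ g ∈ I, homogeneousComponent j (f * g) ∈ Cond := by
    intro f hf g hg
    rw [homogComponent_mul_expand]
    refine Submodule.sum_mem _ fun d _ => Submodule.sum_mem _ fun e _ => ?_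
    have hfd : (homogeneousComponent d f).IsHomogeneous d := homogeneousComponent_isHomogeneous d f
    have hge : (homogeneousComponent e g).IsHomogeneous e := homogeneousComponent_isHomogeneous e g
    rw [homogeneousComponent_of_mem ((mem_homogeneousSubmodule _ _).mpr (hfd.mul hge))]
    split_ifs with hde
    swap
    · exact zero_mem _
    set fd := homogeneousComponent d f with hfddef
    set ge := homogeneousComponent e g with hgedef
    have hfdI : fd ∈ I := hAG.1 f hf d
    have hgeI : ge ∈ I := hAG.1 g hg e
    by_cases hd1 : d ≤ 1
    · rw [low_comp_zero hAG hI1 hfdI hfd hd1, zero_mul]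
      exact zero_mem _
    by_cases he1 : e ≤ 1
    · rw [low_comp_zero hAG hI1 hgeI hge he1, mul_zero]
      exact zero_mem _
    have hsf := (structure_iff hAG hWI hI1 hfd (by omega) (by omega)).mp hfdI
    have hsg := (structure_iff hAG hWI hI1 hge (by omega) (by omega)).mp hgeI
    rw [hCond]
    refine Submodule.mem_inf.mpr ⟨?_, Submodule.mem_inf.mpr ⟨?_, Submodule.mem_inf.mpr ⟨?_, ?_⟩⟩⟩
    · rw [Submodule.mem_comap, Submodule.restrictScalars_mem, cL_mul, Finset.sum_range_one,
        pow_two]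
      exact Ideal.mul_mem_mul hsf.1 hsg.1
    · rw [Submodule.mem_comap, Submodule.restrictScalars_mem, cL_mul, Finset.sum_range_succ,
        Finset.sum_range_one]
      refine Submodule.add_mem _ ?_ ?_
      · have h1g : cL 1 ge ∈ M3 := mem_span_X_of_homog (cL_isHomogeneous hge (by omega)) (by omega)
        have hmm := Ideal.mul_mem_mul h1g hsf.1
        have hco : cL 1 ge * cL 0 fd = cL 0 fd * cL (1 - 0) ge := by
          norm_num [mul_comm]
        rwa [hco] at hmm
      · have h1f : cL 1 fd ∈ M3 := mem_span_X_of_homog (cL_isHomogeneous hfd (by omega)) (by omega)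
        have : cL (1 - 1) ge = cL 0 ge := by norm_num
        rw [this]
        exact Ideal.mul_mem_mul h1f hsg.1
    · rw [LinearMap.mem_ker, cL_mul]
      refine Finset.sum_eq_zero fun k hk => ?_
      rcases lt_trichotomy k d with hlt | rfl | hgt
      · have : j - 1 - k = e ∨ e < j - 1 - k := by omega
        rcases this with heq | hlt2
        · rw [heq, hsg.2, mul_zero]
        · rw [cL_eq_zero_of_lt hge hlt2, mul_zero]
      · rw [hsf.2, zero_mul]
      · rw [cL_eq_zero_of_lt hfd hgt, zero_mul]
    · rw [LinearMap.mem_ker, cL_mul]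
      refine Finset.sum_eq_zero fun k hk => ?_
      rcases lt_trichotomy k d with hlt | rfl | hgt
      · rw [cL_eq_zero_of_lt hge (by omega : e < j - k), mul_zero]
      · rw [hsf.2, zero_mul]
      · rw [cL_eq_zero_of_lt hfd hgt, zero_mul]
  have key : ∀ x ∈ Submodule.restrictScalars K I * Submodule.restrictScalars K I,
      homogeneousComponent j x ∈ Cond := fun x hx =>
    Submodule.mul_induction_on hx (fun f hf g hg => hgen f hf g hg)
      (fun a b ha hb => by rw [map_add]; exact add_mem ha hb)
  have hp2 : p ∈ Submodule.restrictScalars K I * Submodule.restrictScalars K I := by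
    rw [← Submodule.restrictScalars_mul]
    rw [pow_two] at hpI
    exact hpI
  have hcond := key p hp2
  rw [homogeneousComponent_of_mem ((mem_homogeneousSubmodule _ _).mpr hp), if_pos rfl,
    hCond] at hcond
  obtain ⟨h0, hrest⟩ := Submodule.mem_inf.mp hcond
  obtain ⟨h1, hrest2⟩ := Submodule.mem_inf.mp hrest
  obtain ⟨h2, h3⟩ := Submodule.mem_inf.mp hrest2
  exact ⟨h0, h1, h2, h3⟩

lemma conditions_Isq (hAG : IsAG 4 K I j) (hj5 : 5 ≤ j)
    (hWI : ∀ k : Fin 3, (X 0 : MvPolynomial (Fin 4) K) * X k.succ ∈ I)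
    {p : MvPolynomial (Fin 4) K} (hp : p.IsHomogeneous j)
    (h0 : cL 0 p ∈ (interR' I) ^ 2)
    (h1 : cL 1 p ∈ Ideal.span (Set.range (X : Fin 3 → MvPolynomial (Fin 3) K)) * interR' I)
    (h2 : cL (j - 1) p = 0) (h3 : cL j p = 0) : p ∈ I ^ 2 := by
  have hII : ∀ v ∈ interR' I * interR' I, rename Fin.succ v ∈ I * I := by
    intro v hv
    refine Submodule.mul_induction_on hv (fun a ha b hb => ?_) (fun x y hx hy => ?_)
    · rw [map_mul]
      exact Ideal.mul_mem_mul (Ideal.mem_comap.mp ha) (Ideal.mem_comap.mp hb)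
    · rw [map_add]; exact add_mem hx hy
  have hMJ : ∀ v ∈ Ideal.span (Set.range (X : Fin 3 → MvPolynomial (Fin 3) K)) * interR' I,
      (X 0 : MvPolynomial (Fin 4) K) * rename Fin.succ v ∈ I * I := by
    intro v hv
    refine Submodule.mul_induction_on hv (fun a ha b hb => ?_) (fun x y hx hy => ?_)
    · rw [map_mul]
      have hr : (X 0 : MvPolynomial (Fin 4) K) * (rename Fin.succ a * rename Fin.succ b) =
          (X 0 * rename Fin.succ a) * rename Fin.succ b := by ring
      rw [hr]
      exact Ideal.mul_mem_mul (X0_mul_mem hWI ha) (Ideal.mem_comap.mp hb)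
    · rw [map_add, mul_add]; exact add_mem hx hy
  have hHigh : ∀ (q : MvPolynomial (Fin 3) K) (e : ℕ), q.IsHomogeneous e → 2 ≤ e →
      ∀ t, 2 ≤ t → (X 0 : MvPolynomial (Fin 4) K) ^ t * rename Fin.succ q ∈ I * I := by
    intro q e hq he t ht
    have hq2 : q ∈ Ideal.span (Set.range (X : Fin 3 → MvPolynomial (Fin 3) K)) *
        Ideal.span (Set.range (X : Fin 3 → MvPolynomial (Fin 3) K)) := by
      have hmem := homog_mem_pow hq
      have hle := Ideal.pow_le_pow_right (I := Ideal.span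
        (Set.range (X : Fin 3 → MvPolynomial (Fin 3) K))) he
      rw [pow_two] at hle
      exact hle hmem
    refine Submodule.mul_induction_on hq2 (fun a ha b hb => ?_) (fun x y hx hy => ?_)
    · obtain ⟨t', rfl⟩ : ∃ t', t = t' + 2 := ⟨t - 2, by omega⟩
      rw [map_mul]
      have hr : (X 0 : MvPolynomial (Fin 4) K) ^ (t' + 2) *
          (rename Fin.succ a * rename Fin.succ b) =
          ((X 0 * rename Fin.succ a) * (X 0 * rename Fin.succ b)) * X 0 ^ t' := by ring
      rw [hr]
      exact Ideal.mul_mem_right _ _ (Ideal.mul_mem_mul (X0_mul_mem hWI ha) (X0_mul_mem hWI hb))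
    · rw [map_add, mul_add]; exact add_mem hx hy
  rw [pow_two, reconstruct hp]
  refine Submodule.sum_mem _ fun t htr => ?_
  have htj : t < j + 1 := Finset.mem_range.mp htr
  rcases Nat.eq_zero_or_pos t with rfl | ht1
  · rw [pow_zero, one_mul]
    rw [pow_two] at h0
    exact hII _ h0
  rcases eq_or_ne t 1 with rfl | ht2
  · rw [pow_one]
    exact hMJ _ h1
  by_cases htj1 : t = j - 1
  · rw [htj1, h2, map_zero, mul_zero]
    exact zero_mem _
  by_cases htjj : t = j
  · rw [htjj, h3, map_zero, mul_zero]
    exact zero_mem _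
  · exact hHigh _ (j - t) (cL_isHomogeneous hp (by omega)) (by omega) t (by omega)

end Main
end Stmt12
namespace Stmt12

variable {K : Type*} [Field K]

lemma degree_one_single {m : Fin 3 →₀ ℕ} (hm : Finsupp.degree m = 1) :
    ∃ i, m = Finsupp.single i 1 := by
  have hne : m.support.Nonempty := by
    rcases Finset.eq_empty_or_nonempty m.support with he | hne
    · exfalso
      have : m = 0 := Finsupp.support_eq_empty.mp he
      rw [this] at hm
      simp [Finsupp.degree] at hm
    · exact hne
  obtain ⟨i, hi⟩ := hne
  have hsum : ∑ a ∈ m.support, m a = 1 := hm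
  have hcard : m.support.card • 1 ≤ ∑ a ∈ m.support, m a := by
    refine Finset.card_nsmul_le_sum _ _ _ fun a ha => ?_
    have := Finsupp.mem_support_iff.mp ha
    omega
  have hc1 : m.support.card = 1 := by
    have h1 : 1 ≤ m.support.card := Finset.card_pos.mpr ⟨i, hi⟩
    simp only [smul_eq_mul, mul_one] at hcard
    omega
  obtain ⟨a, ha⟩ := Finset.card_eq_one.mp hc1
  obtain ⟨hne0, heq⟩ := Finsupp.support_eq_singleton.mp ha
  have hma : m a = 1 := by
    rw [ha] at hsum
    simpa using hsum
  exact ⟨a, by rw [heq, hma]⟩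

def homog0Equiv : ↥(homogeneousSubmodule (Fin 3) K 0) ≃ₗ[K] K where
  toFun p := coeff 0 (p : MvPolynomial (Fin 3) K)
  map_add' p q := by simp
  map_smul' a p := by simp
  invFun k := ⟨C k, (mem_homogeneousSubmodule _ _).mpr (isHomogeneous_C _ _)⟩
  left_inv p := Subtype.ext (homog_zero_eq_C ((mem_homogeneousSubmodule _ _).mp p.2)).symm
  right_inv k := by simp

lemma finrank_homog3_zero : Module.finrank K ↥(homogeneousSubmodule (Fin 3) K 0) = 1 := by
  rw [(homog0Equiv (K := K)).finrank_eq, Module.finrank_self]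

def homog1Equiv : ↥(homogeneousSubmodule (Fin 3) K 1) ≃ₗ[K] (Fin 3 → K) where
  toFun p i := coeff (Finsupp.single i 1) (p : MvPolynomial (Fin 3) K)
  map_add' p q := by funext i; simp
  map_smul' a p := by funext i; simp
  invFun f := ⟨∑ i, f i • X i, by
    refine Submodule.sum_mem _ fun i _ => ?_
    rw [mem_homogeneousSubmodule, smul_eq_C_mul]
    exact homog_cast ((isHomogeneous_C (Fin 3) (f i)).mul (isHomogeneous_X K i)) (zero_add 1)⟩
  left_inv p := by
    refine Subtype.ext ?_
    have hp : (p : MvPolynomial (Fin 3) K).IsHomogeneous 1 :=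
      (mem_homogeneousSubmodule _ _).mp p.2
    show (∑ i, coeff (Finsupp.single i 1) (p : MvPolynomial (Fin 3) K) • X i) = _
    ext m
    rw [coeff_sum]
    simp_rw [coeff_smul, coeff_X', smul_eq_mul, mul_ite, mul_one, mul_zero]
    by_cases hm : ∃ i, m = Finsupp.single i 1
    · obtain ⟨i0, rfl⟩ := hm
      rw [Finset.sum_eq_single i0]
      · rw [if_pos rfl]
      · intro b _ hb
        rw [if_neg]
        intro hsb
        exact hb ((Finsupp.single_left_inj one_ne_zero).mp hsb)
      · intro hni
        exact absurd (Finset.mem_univ i0) hni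
    · push_neg at hm
      have hz : coeff m (p : MvPolynomial (Fin 3) K) = 0 := by
        refine hp.coeff_eq_zero fun hdeg => ?_
        obtain ⟨i, hi⟩ := degree_one_single hdeg
        exact hm i hi
      rw [hz, Finset.sum_eq_zero]
      intro b _
      rw [if_neg]
      intro hsb
      exact hm b hsb.symm
  right_inv f := by
    funext i
    show coeff (Finsupp.single i 1) (∑ i', f i' • X i') = f i
    rw [coeff_sum]
    simp_rw [coeff_smul, coeff_X', smul_eq_mul, mul_ite, mul_one, mul_zero]
    rw [Finset.sum_eq_single i]
    · rw [if_pos rfl]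
    · intro b _ hb
      rw [if_neg]
      intro hsb
      exact hb ((Finsupp.single_left_inj one_ne_zero).mp hsb)
    · intro hni
      exact absurd (Finset.mem_univ i) hni

lemma finrank_homog3_one : Module.finrank K ↥(homogeneousSubmodule (Fin 3) K 1) = 3 := by
  rw [(homog1Equiv (K := K)).finrank_eq]
  simp [Module.finrank_pi]

end Stmt12
namespace Stmt12

variable {K : Type*} [Field K]

/-- product of submodules is isomorphic to the product of the subspaces -/
def prodSubEquiv {M N : Type*} [AddCommGroup M] [AddCommGroup N] [Module K M] [Module K N]
    (p : Submodule K M) (q : Submodule K N) : ↥(p.prod q) ≃ₗ[K] (↥p × ↥q) where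
  toFun x := (⟨x.1.1, x.2.1⟩, ⟨x.1.2, x.2.2⟩)
  map_add' x y := rfl
  map_smul' a x := rfl
  invFun y := ⟨(y.1.1, y.2.1), ⟨y.1.2, y.2.2⟩⟩
  left_inv x := rfl
  right_inv y := rfl

/-- `q ↦ mk (rename succ q)` on degree-`d` forms of `R'`. -/
def ρmap (I : Ideal (MvPolynomial (Fin 4) K)) (d : ℕ) :
    ↥(homogeneousSubmodule (Fin 3) K d) →ₗ[K] (MvPolynomial (Fin 4) K ⧸ I) :=
  ((Ideal.Quotient.mkₐ K I).toLinearMap.comp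
    (rename (Fin.succ : Fin 3 → Fin 4)).toLinearMap).comp
    (homogeneousSubmodule (Fin 3) K d).subtype

lemma ρmap_apply (I : Ideal (MvPolynomial (Fin 4) K)) (d : ℕ)
    (q : ↥(homogeneousSubmodule (Fin 3) K d)) :
    ρmap I d q = Ideal.Quotient.mk I (rename Fin.succ (q : MvPolynomial (Fin 3) K)) := rfl

/-- multiplication by a linear form, followed by `ρ`. -/
def mulMap (I : Ideal (MvPolynomial (Fin 4) K)) (j : ℕ)
    (l : ↥(homogeneousSubmodule (Fin 3) K 1)) :
    ↥(homogeneousSubmodule (Fin 3) K (j - 1)) →ₗ[K] (MvPolynomial (Fin 4) K ⧸ I) :=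
  (((Ideal.Quotient.mkₐ K I).toLinearMap.comp
    (rename (Fin.succ : Fin 3 → Fin 4)).toLinearMap).comp
    (LinearMap.mulLeft K (l : MvPolynomial (Fin 3) K))).comp
    (homogeneousSubmodule (Fin 3) K (j - 1)).subtype

lemma mulMap_apply (I : Ideal (MvPolynomial (Fin 4) K)) (j : ℕ)
    (l : ↥(homogeneousSubmodule (Fin 3) K 1))
    (b : ↥(homogeneousSubmodule (Fin 3) K (j - 1))) :
    mulMap I j l b = Ideal.Quotient.mk I (rename Fin.succ
      ((l : MvPolynomial (Fin 3) K) * (b : MvPolynomial (Fin 3) K))) := rfl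

lemma mulMap_eq_zero_iff (I : Ideal (MvPolynomial (Fin 4) K)) (j : ℕ)
    (l : ↥(homogeneousSubmodule (Fin 3) K 1))
    (b : ↥(homogeneousSubmodule (Fin 3) K (j - 1))) :
    mulMap I j l b = 0 ↔ rename Fin.succ
      ((l : MvPolynomial (Fin 3) K) * (b : MvPolynomial (Fin 3) K)) ∈ I := by
  rw [mulMap_apply, Ideal.Quotient.eq_zero_iff_mem]

set_option synthInstance.maxHeartbeats 400000 in
lemma mk_smulQ (I : Ideal (MvPolynomial (Fin 4) K)) (a : K) (r : MvPolynomial (Fin 4) K) :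
    Ideal.Quotient.mk I (a • r) = a • Ideal.Quotient.mk I r := by
  rw [← Ideal.Quotient.mkₐ_eq_mk K I]
  exact map_smul (Ideal.Quotient.mkₐ K I) a r

set_option synthInstance.maxHeartbeats 400000 in
lemma mk_addQ (I : Ideal (MvPolynomial (Fin 4) K)) (r s : MvPolynomial (Fin 4) K) :
    Ideal.Quotient.mk I (r + s) = Ideal.Quotient.mk I r + Ideal.Quotient.mk I s :=
  map_add _ r s

section Main

variable {I : Ideal (MvPolynomial (Fin 4) K)} {j : ℕ}

lemma mul_mem_homog_j (hj5 : 5 ≤ j) (l : ↥(homogeneousSubmodule (Fin 3) K 1))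
    (b : ↥(homogeneousSubmodule (Fin 3) K (j - 1))) :
    (l : MvPolynomial (Fin 3) K) * (b : MvPolynomial (Fin 3) K) ∈
      homogeneousSubmodule (Fin 3) K j :=
  (mem_homogeneousSubmodule _ _).mpr (homog_cast
    (((mem_homogeneousSubmodule _ _).mp l.2).mul ((mem_homogeneousSubmodule _ _).mp b.2))
    (by omega))

lemma mulMap_mem_Aj (hj5 : 5 ≤ j) (l : ↥(homogeneousSubmodule (Fin 3) K 1))
    (b : ↥(homogeneousSubmodule (Fin 3) K (j - 1))) :
    mulMap I j l b ∈ LinearMap.range (ρmap I j) :=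
  ⟨⟨_, mul_mem_homog_j hj5 l b⟩, rfl⟩

lemma finrank_Aj (hAG : IsAG 4 K I j) (hj5 : 5 ≤ j)
    (hWI : ∀ k : Fin 3, (X 0 : MvPolynomial (Fin 4) K) * X k.succ ∈ I)
    (hI1 : ∀ f ∈ I, f.IsHomogeneous 1 → f = 0) :
    Module.finrank K ↥(LinearMap.range (ρmap I j)) = 1 := by
  haveI := hAG.2.1
  have hle : LinearMap.range (ρmap I j) ≤ socleSub 4 K I := by
    rintro x ⟨q, rfl⟩
    rw [socleSub, Submodule.mem_iInf]
    intro k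
    rw [LinearMap.mem_ker, LinearMap.mulLeft_apply, ρmap_apply, ← map_mul,
      Ideal.Quotient.eq_zero_iff_mem]
    refine mem_of_hilb_zero (hAG.2.2.2.2 (1 + j) (by omega)) ?_
    exact (isHomogeneous_X K k).mul ((mem_homogeneousSubmodule _ _).mp q.2).rename_isHomogeneous
  have hub : Module.finrank K ↥(LinearMap.range (ρmap I j)) ≤ 1 := by
    have h := Submodule.finrank_mono hle
    rwa [hAG.2.2.1] at h
  have hlb : Module.finrank K ↥(LinearMap.range (ρmap I j)) ≠ 0 := by
    intro h0
    have hbot : LinearMap.range (ρmap I j) = ⊥ := Submodule.finrank_eq_zero.mp h0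
    obtain ⟨a, ha, haI⟩ := exists_phi_not_mem hAG hj5 hWI hI1
    apply haI
    have hmem : ρmap I j ⟨a, (mem_homogeneousSubmodule _ _).mpr ha⟩ ∈
        LinearMap.range (ρmap I j) := LinearMap.mem_range_self _ _
    rw [hbot, Submodule.mem_bot, ρmap_apply, Ideal.Quotient.eq_zero_iff_mem] at hmem
    exact hmem
  omega

set_option maxHeartbeats 1000000 in
set_option synthInstance.maxHeartbeats 400000 in
lemma finrank_homog_j1 (hAG : IsAG 4 K I j) (hj5 : 5 ≤ j)
    (hWI : ∀ k : Fin 3, (X 0 : MvPolynomial (Fin 4) K) * X k.succ ∈ I)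
    (hI1 : ∀ f ∈ I, f.IsHomogeneous 1 → f = 0) :
    Module.finrank K ↥(homogeneousSubmodule (Fin 3) K (j - 1)) =
      Module.finrank K ↥(Submodule.restrictScalars K (interR' I) ⊓
        homogeneousSubmodule (Fin 3) K (j - 1)) + 3 := by
  haveI := hAG.2.1
  have hAj1 : Module.finrank K ↥(LinearMap.range (ρmap I j)) = 1 := finrank_Aj hAG hj5 hWI hI1
  set vX : Fin 3 → ↥(homogeneousSubmodule (Fin 3) K 1) :=
    fun i => ⟨X i, (mem_homogeneousSubmodule _ _).mpr (isHomogeneous_X K i)⟩ with hvX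
  set TT : ↥(homogeneousSubmodule (Fin 3) K (j - 1)) →ₗ[K]
      ((MvPolynomial (Fin 4) K ⧸ I) × ((MvPolynomial (Fin 4) K ⧸ I) ×
        (MvPolynomial (Fin 4) K ⧸ I))) :=
    (mulMap I j (vX 0)).prod ((mulMap I j (vX 1)).prod (mulMap I j (vX 2))) with hTT
  have hker : LinearMap.ker TT = (Submodule.restrictScalars K (interR' I) ⊓
      homogeneousSubmodule (Fin 3) K (j - 1)).comap
      (homogeneousSubmodule (Fin 3) K (j - 1)).subtype := by
    ext b
    simp only [LinearMap.mem_ker, hTT, LinearMap.prod_apply, Function.prod, Prod.mk_eq_zero]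
    rw [mulMap_eq_zero_iff, mulMap_eq_zero_iff, mulMap_eq_zero_iff]
    constructor
    · rintro ⟨h0, h1, h2⟩
      refine Submodule.mem_comap.mpr (Submodule.mem_inf.mpr ⟨?_, b.2⟩)
      rw [Submodule.restrictScalars_mem]
      refine Ideal.mem_comap.mpr ?_
      refine mem_J_of_mul_mem hAG hj5 hWI ((mem_homogeneousSubmodule _ _).mp b.2) ?_
      intro i
      fin_cases i
      · exact h0
      · exact h1
      · exact h2
    · intro hb
      have hbJ : rename Fin.succ (b : MvPolynomial (Fin 3) K) ∈ I :=
        Ideal.mem_comap.mp ((Submodule.mem_inf.mp (Submodule.mem_comap.mp hb)).1)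
      refine ⟨?_, ?_, ?_⟩ <;>
        · rw [map_mul]
          exact Ideal.mul_mem_left _ _ hbJ
  have hrank := LinearMap.finrank_range_add_finrank_ker TT
  have hkerrank : Module.finrank K ↥(LinearMap.ker TT) =
      Module.finrank K ↥(Submodule.restrictScalars K (interR' I) ⊓
        homogeneousSubmodule (Fin 3) K (j - 1)) := by
    rw [hker]
    exact LinearEquiv.finrank_eq (Submodule.comapSubtypeEquivOfLe inf_le_right)
  have hub : Module.finrank K ↥(LinearMap.range TT) ≤ 3 := by
    have hle : LinearMap.range TT ≤ (LinearMap.range (ρmap I j)).prod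
        ((LinearMap.range (ρmap I j)).prod (LinearMap.range (ρmap I j))) := by
      rintro x ⟨b, rfl⟩
      exact ⟨mulMap_mem_Aj hj5 _ _, mulMap_mem_Aj hj5 _ _, mulMap_mem_Aj hj5 _ _⟩
    have hmono := Submodule.finrank_mono hle
    have hinner : Module.finrank K ↥((LinearMap.range (ρmap I j)).prod
        (LinearMap.range (ρmap I j))) = 2 := by
      rw [LinearEquiv.finrank_eq
        (prodSubEquiv (LinearMap.range (ρmap I j)) (LinearMap.range (ρmap I j))),
        Module.finrank_prod, hAj1]
    have heq : Module.finrank K ↥((LinearMap.range (ρmap I j)).prod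
        ((LinearMap.range (ρmap I j)).prod (LinearMap.range (ρmap I j)))) = 3 := by
      rw [LinearEquiv.finrank_eq (prodSubEquiv (LinearMap.range (ρmap I j))
        ((LinearMap.range (ρmap I j)).prod (LinearMap.range (ρmap I j)))),
        Module.finrank_prod, hAj1, hinner]
    rw [heq] at hmono
    exact hmono
  have hlb : 3 ≤ Module.finrank K ↥(LinearMap.range TT) := by
    set mulMapc : ↥(homogeneousSubmodule (Fin 3) K 1) →
        (↥(homogeneousSubmodule (Fin 3) K (j - 1)) →ₗ[K] ↥(LinearMap.range (ρmap I j))) :=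
      fun l => LinearMap.codRestrict _ (mulMap I j l) (mulMap_mem_Aj hj5 l) with hmmc
    have hmmczero : ∀ (l : ↥(homogeneousSubmodule (Fin 3) K 1))
        (b : ↥(homogeneousSubmodule (Fin 3) K (j - 1))),
        mulMapc l b = 0 ↔ mulMap I j l b = 0 := by
      intro l b
      rw [hmmc, ← Submodule.coe_eq_zero, LinearMap.codRestrict_apply]
    have hkerle : ∀ l : ↥(homogeneousSubmodule (Fin 3) K 1),
        LinearMap.ker TT ≤ LinearMap.ker (mulMapc l) := by
      intro l b hb
      rw [hker] at hb
      have hbJ : (b : MvPolynomial (Fin 3) K) ∈ interR' I :=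
        (Submodule.mem_inf.mp (Submodule.mem_comap.mp hb)).1
      rw [LinearMap.mem_ker, hmmczero, mulMap_eq_zero_iff]
      exact Ideal.mem_comap.mp (Ideal.mul_mem_left _ _ hbJ)
    set SS : ↥(homogeneousSubmodule (Fin 3) K 1) →ₗ[K]
        ((↥(homogeneousSubmodule (Fin 3) K (j - 1)) ⧸ LinearMap.ker TT) →ₗ[K]
          ↥(LinearMap.range (ρmap I j))) :=
      { toFun := fun l => (LinearMap.ker TT).liftQ (mulMapc l) (hkerle l)
        map_add' := fun l l' => by
          refine Submodule.linearMap_qext _ ?_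
          ext b
          simp only [LinearMap.comp_apply, Submodule.mkQ_apply, Submodule.liftQ_apply,
            LinearMap.add_apply, hmmc, LinearMap.codRestrict_apply, Submodule.coe_add,
            mulMap_apply, add_mul, map_add, mk_addQ]
        map_smul' := fun a l => by
          refine Submodule.linearMap_qext _ ?_
          ext b
          simp only [LinearMap.comp_apply, Submodule.mkQ_apply, Submodule.liftQ_apply,
            LinearMap.smul_apply, RingHom.id_apply, hmmc, LinearMap.codRestrict_apply,
            Submodule.coe_smul, mulMap_apply, smul_mul_assoc, map_smul]
          exact mk_smulQ I a _ } with hSS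
    have hSSinj : Function.Injective SS := by
      refine (injective_iff_map_eq_zero SS).mpr fun l hl => ?_
      have hall : ∀ b : MvPolynomial (Fin 3) K, b.IsHomogeneous (j - 1) →
          rename Fin.succ ((l : MvPolynomial (Fin 3) K) * b) ∈ I := by
        intro b hb
        have hzero : SS l (Submodule.Quotient.mk
            ⟨b, (mem_homogeneousSubmodule _ _).mpr hb⟩) = 0 := by
          rw [hl]
          rfl
        have heq2 : SS l (Submodule.Quotient.mk
            ⟨b, (mem_homogeneousSubmodule _ _).mpr hb⟩) =
            mulMapc l ⟨b, (mem_homogeneousSubmodule _ _).mpr hb⟩ :=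
          Submodule.liftQ_apply _ _ _
        rw [heq2, hmmczero, mulMap_eq_zero_iff] at hzero
        exact hzero
      have hl0 : (l : MvPolynomial (Fin 3) K) = 0 :=
        ell_zero hAG hj5 hWI hI1 ((mem_homogeneousSubmodule _ _).mp l.2) hall
      exact Subtype.ext hl0
    have h3 := LinearMap.finrank_le_finrank_of_injective hSSinj
    rw [finrank_homog3_one, Module.finrank_linearMap, hAj1, mul_one] at h3
    have hq := LinearEquiv.finrank_eq TT.quotKerEquivRange
    have hq2 := Submodule.finrank_quotient_add_finrank (LinearMap.ker TT)
    omega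
  omega

end Main
end Stmt12
namespace Stmt12

variable {K : Type*} [Field K]

section Final

variable {I : Ideal (MvPolynomial (Fin 4) K)} {j : ℕ}

set_option maxHeartbeats 1600000 in
set_option synthInstance.maxHeartbeats 400000 in
lemma main_calc (hAG : IsAG 4 K I j) (hj5 : 5 ≤ j)
    (hWI : ∀ k : Fin 3, (X 0 : MvPolynomial (Fin 4) K) * X k.succ ∈ I)
    (hI1 : ∀ f ∈ I, f.IsHomogeneous 1 → f = 0) :
    hilb 4 K (I ^ 2) j = 7 + hilb 3 K ((interR' I) ^ 2) j + numGens (interR' I) (j - 1) := by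
  classical
  haveI := hAG.2.1
  set M3 : Ideal (MvPolynomial (Fin 3) K) :=
    Ideal.span (Set.range (X : Fin 3 → MvPolynomial (Fin 3) K)) with hM3
  -- submodules
  set J2sub : Submodule K ↥(homogeneousSubmodule (Fin 3) K j) :=
    (Submodule.restrictScalars K ((interR' I) ^ 2) ⊓ homogeneousSubmodule (Fin 3) K j).comap
      (homogeneousSubmodule (Fin 3) K j).subtype with hJ2sub
  set MJsub : Submodule K ↥(homogeneousSubmodule (Fin 3) K (j - 1)) :=
    (Submodule.restrictScalars K (M3 * interR' I) ⊓
      homogeneousSubmodule (Fin 3) K (j - 1)).comap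
      (homogeneousSubmodule (Fin 3) K (j - 1)).subtype with hMJsub
  -- the coefficient maps, corestricted
  have hc0mem : ∀ p : ↥(homogeneousSubmodule (Fin 4) K j),
      cL 0 (p : MvPolynomial (Fin 4) K) ∈ homogeneousSubmodule (Fin 3) K j := fun p =>
    (mem_homogeneousSubmodule _ _).mpr
      (homog_cast (cL_isHomogeneous ((mem_homogeneousSubmodule _ _).mp p.2) (by omega)) (by omega))
  have hc1mem : ∀ p : ↥(homogeneousSubmodule (Fin 4) K j),
      cL 1 (p : MvPolynomial (Fin 4) K) ∈ homogeneousSubmodule (Fin 3) K (j - 1) := fun p =>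
    (mem_homogeneousSubmodule _ _).mpr
      (homog_cast (cL_isHomogeneous ((mem_homogeneousSubmodule _ _).mp p.2) (by omega)) rfl)
  have hc2mem : ∀ p : ↥(homogeneousSubmodule (Fin 4) K j),
      cL (j - 1) (p : MvPolynomial (Fin 4) K) ∈ homogeneousSubmodule (Fin 3) K 1 := fun p =>
    (mem_homogeneousSubmodule _ _).mpr
      (homog_cast (cL_isHomogeneous ((mem_homogeneousSubmodule _ _).mp p.2) (by omega)) (by omega))
  have hc3mem : ∀ p : ↥(homogeneousSubmodule (Fin 4) K j),
      cL j (p : MvPolynomial (Fin 4) K) ∈ homogeneousSubmodule (Fin 3) K 0 := fun p =>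
    (mem_homogeneousSubmodule _ _).mpr
      (homog_cast (cL_isHomogeneous ((mem_homogeneousSubmodule _ _).mp p.2) le_rfl) (by omega))
  set c0r : ↥(homogeneousSubmodule (Fin 4) K j) →ₗ[K] ↥(homogeneousSubmodule (Fin 3) K j) :=
    LinearMap.codRestrict _ ((cL 0).comp (homogeneousSubmodule (Fin 4) K j).subtype) hc0mem
    with hc0r
  set c1r : ↥(homogeneousSubmodule (Fin 4) K j) →ₗ[K] ↥(homogeneousSubmodule (Fin 3) K (j - 1)) :=
    LinearMap.codRestrict _ ((cL 1).comp (homogeneousSubmodule (Fin 4) K j).subtype) hc1mem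
    with hc1r
  set c2r : ↥(homogeneousSubmodule (Fin 4) K j) →ₗ[K] ↥(homogeneousSubmodule (Fin 3) K 1) :=
    LinearMap.codRestrict _ ((cL (j - 1)).comp (homogeneousSubmodule (Fin 4) K j).subtype) hc2mem
    with hc2r
  set c3r : ↥(homogeneousSubmodule (Fin 4) K j) →ₗ[K] ↥(homogeneousSubmodule (Fin 3) K 0) :=
    LinearMap.codRestrict _ ((cL j).comp (homogeneousSubmodule (Fin 4) K j).subtype) hc3mem
    with hc3r
  set Θ : ↥(homogeneousSubmodule (Fin 4) K j) →ₗ[K]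
      ((↥(homogeneousSubmodule (Fin 3) K j) ⧸ J2sub) ×
        ((↥(homogeneousSubmodule (Fin 3) K (j - 1)) ⧸ MJsub) ×
          (↥(homogeneousSubmodule (Fin 3) K 1) × ↥(homogeneousSubmodule (Fin 3) K 0)))) :=
    (J2sub.mkQ.comp c0r).prod ((MJsub.mkQ.comp c1r).prod (c2r.prod c3r)) with hΘ
  -- kernel computation
  have hkerΘ : LinearMap.ker Θ = (Submodule.restrictScalars K (I ^ 2) ⊓
      homogeneousSubmodule (Fin 4) K j).comap (homogeneousSubmodule (Fin 4) K j).subtype := by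
    ext p
    simp only [LinearMap.mem_ker, hΘ, LinearMap.prod_apply, Function.prod, Prod.mk_eq_zero,
      LinearMap.comp_apply, Submodule.mkQ_apply, Submodule.Quotient.mk_eq_zero]
    have hq0 : c0r p ∈ J2sub ↔ cL 0 (p : MvPolynomial (Fin 4) K) ∈ (interR' I) ^ 2 := by
      rw [hJ2sub, Submodule.mem_comap]
      constructor
      · intro h
        exact (Submodule.mem_inf.mp h).1
      · intro h
        exact Submodule.mem_inf.mpr ⟨h, hc0mem p⟩
    have hq1 : c1r p ∈ MJsub ↔ cL 1 (p : MvPolynomial (Fin 4) K) ∈ M3 * interR' I := by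
      rw [hMJsub, Submodule.mem_comap]
      constructor
      · intro h
        exact (Submodule.mem_inf.mp h).1
      · intro h
        exact Submodule.mem_inf.mpr ⟨h, hc1mem p⟩
    have hq2 : c2r p = 0 ↔ cL (j - 1) (p : MvPolynomial (Fin 4) K) = 0 := by
      rw [← Submodule.coe_eq_zero]
      rfl
    have hq3 : c3r p = 0 ↔ cL j (p : MvPolynomial (Fin 4) K) = 0 := by
      rw [← Submodule.coe_eq_zero]
      rfl
    rw [hq0, hq1, hq2, hq3, Submodule.mem_comap, Submodule.mem_inf]
    constructor
    · rintro ⟨h0, h1, h2, h3⟩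
      exact ⟨conditions_Isq hAG hj5 hWI ((mem_homogeneousSubmodule _ _).mp p.2) h0 h1 h2 h3, p.2⟩
    · rintro ⟨hmem, -⟩
      exact Isq_conditions hAG hj5 hWI hI1 ((mem_homogeneousSubmodule _ _).mp p.2) hmem
  -- surjectivity
  have hsurj : LinearMap.range Θ = ⊤ := by
    rw [LinearMap.range_eq_top]
    rintro ⟨q0, q1, u, v⟩
    obtain ⟨a, ha⟩ := Submodule.Quotient.mk_surjective J2sub q0
    obtain ⟨b, hb⟩ := Submodule.Quotient.mk_surjective MJsub q1
    set p : MvPolynomial (Fin 4) K :=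
      X 0 ^ 0 * rename Fin.succ (a : MvPolynomial (Fin 3) K) +
        X 0 ^ 1 * rename Fin.succ (b : MvPolynomial (Fin 3) K) +
        X 0 ^ (j - 1) * rename Fin.succ (u : MvPolynomial (Fin 3) K) +
        X 0 ^ j * rename Fin.succ (v : MvPolynomial (Fin 3) K) with hpdef
    have hphomog : p ∈ homogeneousSubmodule (Fin 4) K j := by
      rw [mem_homogeneousSubmodule, hpdef]
      refine IsHomogeneous.add (IsHomogeneous.add (IsHomogeneous.add ?_ ?_) ?_) ?_
      · exact homog_cast ((((isHomogeneous_X K (0 : Fin 4)).pow 0).mul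
          ((mem_homogeneousSubmodule _ _).mp a.2).rename_isHomogeneous)) (by omega)
      · exact homog_cast ((((isHomogeneous_X K (0 : Fin 4)).pow 1).mul
          ((mem_homogeneousSubmodule _ _).mp b.2).rename_isHomogeneous)) (by omega)
      · exact homog_cast ((((isHomogeneous_X K (0 : Fin 4)).pow (j - 1)).mul
          ((mem_homogeneousSubmodule _ _).mp u.2).rename_isHomogeneous)) (by omega)
      · exact homog_cast ((((isHomogeneous_X K (0 : Fin 4)).pow j).mul
          ((mem_homogeneousSubmodule _ _).mp v.2).rename_isHomogeneous)) (by omega)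
    have hcLp : ∀ t : ℕ, cL t p =
        (if (0 : ℕ) = t then (a : MvPolynomial (Fin 3) K) else 0) +
        (if (1 : ℕ) = t then (b : MvPolynomial (Fin 3) K) else 0) +
        (if j - 1 = t then (u : MvPolynomial (Fin 3) K) else 0) +
        (if j = t then (v : MvPolynomial (Fin 3) K) else 0) := by
      intro t
      rw [hpdef, map_add, map_add, map_add, cL_pow_mul_rename, cL_pow_mul_rename,
        cL_pow_mul_rename, cL_pow_mul_rename]
    have e0 : cL 0 p = (a : MvPolynomial (Fin 3) K) := by
      rw [hcLp 0, if_pos rfl, if_neg (by omega), if_neg (by omega), if_neg (by omega)]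
      simp
    have e1 : cL 1 p = (b : MvPolynomial (Fin 3) K) := by
      rw [hcLp 1, if_pos rfl, if_neg (by omega), if_neg (by omega), if_neg (by omega)]
      simp
    have e2 : cL (j - 1) p = (u : MvPolynomial (Fin 3) K) := by
      rw [hcLp (j - 1), if_pos rfl, if_neg (by omega), if_neg (by omega), if_neg (by omega)]
      simp
    have e3 : cL j p = (v : MvPolynomial (Fin 3) K) := by
      rw [hcLp j, if_pos rfl, if_neg (by omega), if_neg (by omega), if_neg (by omega)]
      simp
    refine ⟨⟨p, hphomog⟩, ?_⟩
    have hc0 : c0r ⟨p, hphomog⟩ = a := Subtype.ext e0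
    have hc1 : c1r ⟨p, hphomog⟩ = b := Subtype.ext e1
    have hc2 : c2r ⟨p, hphomog⟩ = u := Subtype.ext e2
    have hc3 : c3r ⟨p, hphomog⟩ = v := Subtype.ext e3
    simp only [hΘ, LinearMap.prod_apply, Function.prod, LinearMap.comp_apply, Submodule.mkQ_apply,
      hc0, hc1, hc2, hc3, ha, hb]
  -- rank bookkeeping
  have hrn := LinearMap.finrank_range_add_finrank_ker Θ
  rw [hsurj, finrank_top] at hrn
  have hkerrank : Module.finrank K ↥(LinearMap.ker Θ) =
      Module.finrank K ↥(Submodule.restrictScalars K (I ^ 2) ⊓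
        homogeneousSubmodule (Fin 4) K j) := by
    rw [hkerΘ]
    exact LinearEquiv.finrank_eq (Submodule.comapSubtypeEquivOfLe inf_le_right)
  have hprodrank : Module.finrank K
      ((↥(homogeneousSubmodule (Fin 3) K j) ⧸ J2sub) ×
        ((↥(homogeneousSubmodule (Fin 3) K (j - 1)) ⧸ MJsub) ×
          (↥(homogeneousSubmodule (Fin 3) K 1) × ↥(homogeneousSubmodule (Fin 3) K 0)))) =
      Module.finrank K (↥(homogeneousSubmodule (Fin 3) K j) ⧸ J2sub) +
        (Module.finrank K (↥(homogeneousSubmodule (Fin 3) K (j - 1)) ⧸ MJsub) + (3 + 1)) := by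
    rw [Module.finrank_prod, Module.finrank_prod, Module.finrank_prod,
      finrank_homog3_one, finrank_homog3_zero]
  have hI2rank := hilb_add_finrank 4 (I ^ 2) j
  have hJ2rank := hilb_add_finrank 3 ((interR' I) ^ 2) j
  have hQ0 := Submodule.finrank_quotient_add_finrank J2sub
  have hQ1 := Submodule.finrank_quotient_add_finrank MJsub
  have hJ2sr : Module.finrank K ↥J2sub = Module.finrank K
      ↥(Submodule.restrictScalars K ((interR' I) ^ 2) ⊓ homogeneousSubmodule (Fin 3) K j) := by
    rw [hJ2sub]
    exact LinearEquiv.finrank_eq (Submodule.comapSubtypeEquivOfLe inf_le_right)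
  have hMJsr : Module.finrank K ↥MJsub = Module.finrank K
      ↥(Submodule.restrictScalars K (M3 * interR' I) ⊓
        homogeneousSubmodule (Fin 3) K (j - 1)) := by
    rw [hMJsub]
    exact LinearEquiv.finrank_eq (Submodule.comapSubtypeEquivOfLe inf_le_right)
  have hcodim3 := finrank_homog_j1 hAG hj5 hWI hI1
  have hnum : numGens (interR' I) (j - 1) =
      Module.finrank K ↥(Submodule.restrictScalars K (interR' I) ⊓
        homogeneousSubmodule (Fin 3) K (j - 1)) -
      Module.finrank K ↥(Submodule.restrictScalars K (M3 * interR' I) ⊓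
        homogeneousSubmodule (Fin 3) K (j - 1)) := rfl
  have hmle : Module.finrank K ↥(Submodule.restrictScalars K (M3 * interR' I) ⊓
      homogeneousSubmodule (Fin 3) K (j - 1)) ≤
      Module.finrank K ↥(Submodule.restrictScalars K (interR' I) ⊓
        homogeneousSubmodule (Fin 3) K (j - 1)) := by
    refine Submodule.finrank_mono ?_
    refine inf_le_inf_right _ ?_
    intro x hx
    exact Ideal.mul_le_right hx
  rw [hprodrank, hkerrank] at hrn
  omega

end Final
end Stmt12
/-- Let `A = R/I` be a graded Artinian Gorenstein quotient of
`R = K[w,x,y,z]` of socle degree `j ≥ 5` with `I_1 = 0` and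
`I_2 = ⟨wx, wy, wz⟩`, and let `J = I ∩ K[x,y,z] ⊆ R' = K[x,y,z]`.  Then
`dim_K (R/I²)_j = 7 + dim_K (R'/J²)_j + ν_{j-1}(J)`. -/
theorem statement_12 {K : Type*} [Field K] [IsAlgClosed K] [CharZero K]
    (j : ℕ) (hj : 5 ≤ j) (I : Ideal (MvPolynomial (Fin 4) K))
    (hI : IsAG 4 K I j)
    (hI1 : ∀ f ∈ I, f.IsHomogeneous 1 → f = 0)
    (hI2 : Submodule.restrictScalars K I ⊓ homogeneousSubmodule (Fin 4) K 2 =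
      Submodule.span K {X 0 * X 1, X 0 * X 2, X 0 * X 3}) :
    hilb 4 K (I ^ 2) j = 7 + hilb 3 K ((interR' I) ^ 2) j + numGens (interR' I) (j - 1) := by
  have hWI : ∀ k : Fin 3, (X 0 : MvPolynomial (Fin 4) K) * X k.succ ∈ I := by
    intro k
    have hsub : (X 0 : MvPolynomial (Fin 4) K) * X k.succ ∈
        Submodule.span K {X 0 * X 1, X 0 * X 2, X 0 * X 3} := by
      refine Submodule.subset_span ?_
      fin_cases k
      · exact Set.mem_insert _ _
      · exact Set.mem_insert_of_mem _ (Set.mem_insert _ _)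
      · exact Set.mem_insert_of_mem _ (Set.mem_insert_of_mem _ rfl)
    rw [← hI2] at hsub
    exact hsub.1
  exact Stmt12.main_calc hI hj hWI hI1

end
end
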